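/- Let n = 2. For V ∈ C^∞_even(ℝ²) of the form V(x₁,x₂) = x₁^{2k} x₂^{2l}, the m-th Fourier coefficient of V^ave with respect to the circle action e^{iθ}·(z₁,z₂) = (e^{iθ}z₁, e^{-iθ}z₂) vanishes unless m = 4r with |r| ≤ min(k,l), in which case it equals 4^{-(k+l)} C(2k, k+r) C(2l, l-r) |z₁|^{2k} |z₂|^{2l} e^{2ir(θ₁-θ₂)}, where zⱼ = |zⱼ| e^{iθⱼ}. In particular, R_m(x₁^{2k} x₂^{2l}) = (B_r x₁^{2k})(B_r x₂^{2l}) for m = 4r. -/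
import Mathlib


open scoped Real

/-- The harmonic-oscillator average of `V : ℝ² → ℝ` in complex phase-space
coordinates `(z₁, z₂)`. -/
noncomputable def ave2 (V : ℝ → ℝ → ℝ) (z₁ z₂ : ℂ) : ℝ :=
  (1 / (2 * Real.pi)) *
    ∫ t in (0:ℝ)..(2 * Real.pi),
      V ((Complex.exp (Complex.I * t) * z₁).re) ((Complex.exp (Complex.I * t) * z₂).re)

/-- The `m`-th Fourier coefficient of `V^ave` with respect to the circle action
`(z₁, z₂) ↦ (e^{iθ} z₁, e^{-iθ} z₂)`. -/
noncomputable def Rcoef (m : ℤ) (V : ℝ → ℝ → ℝ) (z₁ z₂ : ℂ) : ℂ :=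
  (1 / (2 * Real.pi)) *
    ∫ θ in (0:ℝ)..(2 * Real.pi),
      (ave2 V (Complex.exp (Complex.I * θ) * z₁) (Complex.exp (-(Complex.I * θ)) * z₂) : ℂ) *
        Complex.exp (-(m : ℂ) * θ * Complex.I)


section Aux
open Complex Finset

lemma int_exp (n : ℤ) : ∫ t in (0:ℝ)..(2*Real.pi), Complex.exp ((n:ℂ) * t * Complex.I)
    = if n = 0 then (2*Real.pi : ℂ) else 0 := by
  rcases eq_or_ne n 0 with h | h
  · simp [h, intervalIntegral.integral_const]
  · rw [if_neg h]
    have hc : (n:ℂ) * Complex.I ≠ 0 := by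
      simp [Complex.I_ne_zero, Int.cast_injective.ne_iff, h]
    have h2 : ∀ t : ℝ, (n:ℂ) * t * Complex.I = ((n:ℂ) * Complex.I) * t := by intro t; ring
    simp_rw [h2]
    rw [integral_exp_mul_complex hc]
    have h1 : ((n:ℂ) * Complex.I) * (2*Real.pi : ℝ) = (n:ℂ) * (2*Real.pi*Complex.I) := by
      push_cast; ring
    rw [h1, Complex.exp_int_mul_two_pi_mul_I]
    simp


lemma re_coe (z : ℂ) (t : ℝ) : ((Complex.exp (Complex.I * t) * z).re : ℂ)
    = (Complex.exp (Complex.I * t) * z + Complex.exp (-(Complex.I * t)) * (starRingEnd ℂ) z)/2 := by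
  have h : (starRingEnd ℂ) (Complex.exp (Complex.I * t) * z)
      = Complex.exp (-(Complex.I * t)) * (starRingEnd ℂ) z := by
    rw [map_mul, ← Complex.exp_conj]
    congr 1
    simp [Complex.conj_I]
  have h2 := Complex.add_conj (Complex.exp (Complex.I * t) * z)
  rw [h] at h2
  rw [h2]; push_cast; ring


noncomputable def Tterm (k l : ℕ) (z₁ z₂ : ℂ) (p q : ℕ) : ℂ :=
  (Nat.choose (2*k) p : ℂ) * (Nat.choose (2*l) q : ℂ) / 2^(2*k+2*l) *
    z₁^p * ((starRingEnd ℂ) z₁)^(2*k-p) * z₂^q * ((starRingEnd ℂ) z₂)^(2*l-q)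


lemma expand_pow (n : ℕ) (z w : ℂ) (hw : w ≠ 0) :
    ((w*z + w⁻¹*(starRingEnd ℂ) z)/2)^(2*n)
    = ∑ p ∈ Finset.range (2*n+1),
        (Nat.choose (2*n) p : ℂ)/2^(2*n) * z^p * ((starRingEnd ℂ) z)^(2*n-p)
          * w ^ (2*(p:ℤ) - 2*n) := by
  rw [div_pow, add_pow]
  rw [Finset.sum_div]
  refine Finset.sum_congr rfl fun p hp => ?_
  have hp' : p ≤ 2*n := by simpa using Nat.lt_succ_iff.mp (Finset.mem_range.mp hp)
  have h1 : (w*z)^p = w^p * z^p := mul_pow w z p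
  have h2 : (w⁻¹*(starRingEnd ℂ) z)^(2*n-p) = w⁻¹^(2*n-p) * ((starRingEnd ℂ) z)^(2*n-p) :=
    mul_pow _ _ _
  have h3 : w^p * w⁻¹^(2*n-p) = w ^ (2*(p:ℤ) - 2*n) := by
    rw [← zpow_natCast w p, ← zpow_natCast w⁻¹ (2*n-p), inv_zpow, ← zpow_neg,
      ← zpow_add₀ hw]
    congr 1
    omega
  rw [h1, h2, ← h3]
  ring

lemma zpow_exp_eq (d : ℤ) (t : ℝ) :
    Complex.exp (Complex.I * t) ^ d = Complex.exp ((d:ℂ) * t * Complex.I) := by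
  rw [← Complex.exp_int_mul]
  congr 1; ring


lemma integrand_eq (k l : ℕ) (z₁ z₂ : ℂ) (t : ℝ) :
    ((Complex.exp (Complex.I * t) * z₁).re : ℂ)^(2*k) * ((Complex.exp (Complex.I * t) * z₂).re : ℂ)^(2*l)
    = ∑ p ∈ Finset.range (2*k+1), ∑ q ∈ Finset.range (2*l+1),
        Tterm k l z₁ z₂ p q *
          Complex.exp ((((2*(p:ℤ) - 2*k) + (2*(q:ℤ) - 2*l) : ℤ):ℂ) * t * Complex.I) := by
  have hw : Complex.exp (Complex.I * t) ≠ 0 := Complex.exp_ne_zero _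
  have hinv : Complex.exp (Complex.I * t)⁻¹ = Complex.exp (Complex.I * t)⁻¹ := rfl
  rw [re_coe z₁ t, re_coe z₂ t]
  have hneg : Complex.exp (-(Complex.I * (t:ℂ))) = (Complex.exp (Complex.I * t))⁻¹ :=
    Complex.exp_neg _
  rw [hneg, expand_pow k z₁ _ hw, expand_pow l z₂ _ hw, Finset.sum_mul_sum]
  refine Finset.sum_congr rfl fun p hp => Finset.sum_congr rfl fun q hq => ?_
  rw [Tterm, zpow_exp_eq, zpow_exp_eq]
  have hE : Complex.exp ((((2*(p:ℤ) - 2*k) + (2*(q:ℤ) - 2*l) : ℤ):ℂ) * t * Complex.I)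
      = Complex.exp (((2*(p:ℤ) - 2*k : ℤ):ℂ) * t * Complex.I)
        * Complex.exp (((2*(q:ℤ) - 2*l : ℤ):ℂ) * t * Complex.I) := by
    rw [← Complex.exp_add]
    congr 1
    push_cast
    ring
  rw [hE]
  have h2 : ((2:ℂ)^(2*k+2*l)) = 2^(2*k) * 2^(2*l) := by rw [pow_add]
  rw [h2]
  ring



lemma ave2_eq (k l : ℕ) (V : ℝ → ℝ → ℝ)
    (hV : ∀ x₁ x₂ : ℝ, V x₁ x₂ = x₁ ^ (2 * k) * x₂ ^ (2 * l)) (z₁ z₂ : ℂ) :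
    ((ave2 V z₁ z₂ : ℝ) : ℂ) = ∑ p ∈ Finset.range (2*k+1), ∑ q ∈ Finset.range (2*l+1),
      if (2*(p:ℤ) - 2*k) + (2*(q:ℤ) - 2*l) = 0 then Tterm k l z₁ z₂ p q else 0 := by
  rw [ave2]
  push_cast
  rw [← intervalIntegral.integral_ofReal]
  have hcong : ∀ t : ℝ, ((V ((Complex.exp (Complex.I * t) * z₁).re)
      ((Complex.exp (Complex.I * t) * z₂).re) : ℝ) : ℂ)
      = ∑ p ∈ Finset.range (2*k+1), ∑ q ∈ Finset.range (2*l+1),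
          Tterm k l z₁ z₂ p q *
            Complex.exp ((((2*(p:ℤ) - 2*k) + (2*(q:ℤ) - 2*l) : ℤ):ℂ) * t * Complex.I) := by
    intro t
    rw [hV, Complex.ofReal_mul, Complex.ofReal_pow, Complex.ofReal_pow]
    exact integrand_eq k l z₁ z₂ t
  rw [intervalIntegral.integral_congr (g := fun t => ∑ p ∈ Finset.range (2*k+1),
      ∑ q ∈ Finset.range (2*l+1), Tterm k l z₁ z₂ p q *
        Complex.exp ((((2*(p:ℤ) - 2*k) + (2*(q:ℤ) - 2*l) : ℤ):ℂ) * t * Complex.I))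
      (fun t _ => hcong t)]
  rw [intervalIntegral.integral_finset_sum]
  swap
  · intro p _
    apply Continuous.intervalIntegrable
    fun_prop
  have hin : ∀ p ∈ Finset.range (2*k+1),
      (∫ t in (0:ℝ)..(2*Real.pi), ∑ q ∈ Finset.range (2*l+1), Tterm k l z₁ z₂ p q *
        Complex.exp ((((2*(p:ℤ) - 2*k) + (2*(q:ℤ) - 2*l) : ℤ):ℂ) * t * Complex.I))
      = ∑ q ∈ Finset.range (2*l+1), Tterm k l z₁ z₂ p q *
          (if (2*(p:ℤ) - 2*k) + (2*(q:ℤ) - 2*l) = 0 then (2*Real.pi : ℂ) else 0) := by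
    intro p _
    rw [intervalIntegral.integral_finset_sum]
    swap
    · intro q _
      apply Continuous.intervalIntegrable
      fun_prop
    refine Finset.sum_congr rfl fun q _ => ?_
    rw [intervalIntegral.integral_const_mul, int_exp]
  rw [Finset.sum_congr rfl hin]
  rw [Finset.mul_sum]
  refine Finset.sum_congr rfl fun p _ => ?_
  rw [Finset.mul_sum]
  refine Finset.sum_congr rfl fun q _ => ?_
  have hπ : (Real.pi : ℂ) ≠ 0 := by
    exact_mod_cast Complex.ofReal_ne_zero.mpr Real.pi_ne_zero
  split
  · field_simp
  · simp




lemma conj_exp_I (t : ℝ) : (starRingEnd ℂ) (Complex.exp (Complex.I * t))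
    = Complex.exp (-(Complex.I * t)) := by
  rw [← Complex.exp_conj]
  congr 1
  simp [Complex.conj_I]


lemma Tterm_scale (k l p q : ℕ) (hp : p ≤ 2*k) (hq : q ≤ 2*l) (z₁ z₂ : ℂ) (θ : ℝ) :
    Tterm k l (Complex.exp (Complex.I*θ) * z₁) (Complex.exp (-(Complex.I*θ)) * z₂) p q
    = Tterm k l z₁ z₂ p q *
        Complex.exp ((((2*(p:ℤ)-2*k) - (2*(q:ℤ)-2*l) : ℤ):ℂ) * θ * Complex.I) := by
  set u := Complex.exp (Complex.I * (θ:ℂ)) with hu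
  have hu0 : u ≠ 0 := Complex.exp_ne_zero _
  have hneg : Complex.exp (-(Complex.I * (θ:ℂ))) = u⁻¹ := Complex.exp_neg _
  have hconj1 : (starRingEnd ℂ) u = u⁻¹ := by rw [hu, conj_exp_I, hneg]
  have hconj2 : (starRingEnd ℂ) (u⁻¹) = u := by rw [map_inv₀, hconj1, inv_inv]
  rw [Tterm, Tterm, hneg, map_mul, map_mul, hconj1, hconj2,
    mul_pow u z₁ p, mul_pow, mul_pow, mul_pow]
  have h3 : u^p * (u⁻¹)^(2*k-p) * (u⁻¹)^q * u^(2*l-q)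
      = u ^ ((2*(p:ℤ)-2*k) - (2*(q:ℤ)-2*l)) := by
    rw [← zpow_natCast u p, ← zpow_natCast u⁻¹ (2*k-p), ← zpow_natCast u⁻¹ q,
      ← zpow_natCast u (2*l-q), inv_zpow, inv_zpow, ← zpow_neg, ← zpow_neg,
      ← zpow_add₀ hu0, ← zpow_add₀ hu0, ← zpow_add₀ hu0]
    congr 1
    omega
  rw [← zpow_exp_eq, ← h3]
  ring


lemma Rcoef_eq (k l : ℕ) (V : ℝ → ℝ → ℝ)
    (hV : ∀ x₁ x₂ : ℝ, V x₁ x₂ = x₁ ^ (2 * k) * x₂ ^ (2 * l)) (m : ℤ) (z₁ z₂ : ℂ) :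
    Rcoef m V z₁ z₂ = ∑ p ∈ Finset.range (2*k+1), ∑ q ∈ Finset.range (2*l+1),
      if (2*(p:ℤ) - 2*k) + (2*(q:ℤ) - 2*l) = 0 ∧ (2*(p:ℤ)-2*k) - (2*(q:ℤ)-2*l) = m
      then Tterm k l z₁ z₂ p q else 0 := by
  rw [Rcoef]
  have hpt : ∀ θ : ℝ, ((ave2 V (Complex.exp (Complex.I * θ) * z₁)
        (Complex.exp (-(Complex.I * θ)) * z₂) : ℝ) : ℂ) * Complex.exp (-(m:ℂ) * θ * Complex.I)
      = ∑ p ∈ Finset.range (2*k+1), ∑ q ∈ Finset.range (2*l+1),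
          if (2*(p:ℤ) - 2*k) + (2*(q:ℤ) - 2*l) = 0 then
            Tterm k l z₁ z₂ p q *
              Complex.exp (((((2*(p:ℤ)-2*k) - (2*(q:ℤ)-2*l)) - m : ℤ):ℂ) * θ * Complex.I)
          else 0 := by
    intro θ
    rw [ave2_eq k l V hV, Finset.sum_mul]
    refine Finset.sum_congr rfl fun p hp => ?_
    rw [Finset.sum_mul]
    refine Finset.sum_congr rfl fun q hq => ?_
    have hp' : p ≤ 2*k := by simpa using Nat.lt_succ_iff.mp (Finset.mem_range.mp hp)
    have hq' : q ≤ 2*l := by simpa using Nat.lt_succ_iff.mp (Finset.mem_range.mp hq)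
    rw [ite_mul, zero_mul]
    split
    · rw [Tterm_scale k l p q hp' hq', mul_assoc, ← Complex.exp_add]
      congr 2
      push_cast
      ring
    · rfl
  rw [intervalIntegral.integral_congr (g := fun θ => ∑ p ∈ Finset.range (2*k+1),
      ∑ q ∈ Finset.range (2*l+1),
        if (2*(p:ℤ) - 2*k) + (2*(q:ℤ) - 2*l) = 0 then
          Tterm k l z₁ z₂ p q *
            Complex.exp (((((2*(p:ℤ)-2*k) - (2*(q:ℤ)-2*l)) - m : ℤ):ℂ) * θ * Complex.I)
        else 0) (fun θ _ => hpt θ)]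
  rw [intervalIntegral.integral_finset_sum]
  swap
  · intro p _
    apply Continuous.intervalIntegrable
    apply continuous_finset_sum
    intro q _
    split
    · fun_prop
    · fun_prop
  have hin : ∀ p ∈ Finset.range (2*k+1),
      (∫ θ in (0:ℝ)..(2*Real.pi), ∑ q ∈ Finset.range (2*l+1),
        if (2*(p:ℤ) - 2*k) + (2*(q:ℤ) - 2*l) = 0 then
          Tterm k l z₁ z₂ p q *
            Complex.exp (((((2*(p:ℤ)-2*k) - (2*(q:ℤ)-2*l)) - m : ℤ):ℂ) * θ * Complex.I)
        else 0)
      = ∑ q ∈ Finset.range (2*l+1),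
          if (2*(p:ℤ) - 2*k) + (2*(q:ℤ) - 2*l) = 0 then
            Tterm k l z₁ z₂ p q *
              (if ((2*(p:ℤ)-2*k) - (2*(q:ℤ)-2*l)) - m = 0 then (2*Real.pi:ℂ) else 0)
          else 0 := by
    intro p _
    rw [intervalIntegral.integral_finset_sum]
    swap
    · intro q _
      apply Continuous.intervalIntegrable
      split
      · fun_prop
      · fun_prop
    refine Finset.sum_congr rfl fun q _ => ?_
    split
    · rw [intervalIntegral.integral_const_mul, int_exp]
    · simp
  rw [Finset.sum_congr rfl hin, Finset.mul_sum]
  refine Finset.sum_congr rfl fun p _ => ?_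
  rw [Finset.mul_sum]
  refine Finset.sum_congr rfl fun q _ => ?_
  have hπ : (Real.pi : ℂ) ≠ 0 := by
    exact_mod_cast Complex.ofReal_ne_zero.mpr Real.pi_ne_zero
  by_cases h1 : (2*(p:ℤ) - 2*k) + (2*(q:ℤ) - 2*l) = 0
  · by_cases h2 : (2*(p:ℤ)-2*k) - (2*(q:ℤ)-2*l) = m
    · rw [if_pos h1, if_pos (by omega : ((2*(p:ℤ)-2*k) - (2*(q:ℤ)-2*l)) - m = 0),
        if_pos ⟨h1, h2⟩]
      field_simp
    · rw [if_pos h1, if_neg (by omega : ¬((2*(p:ℤ)-2*k) - (2*(q:ℤ)-2*l)) - m = 0),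
        if_neg (by tauto)]
      simp
  · rw [if_neg h1, if_neg (by tauto)]
    simp


end Aux

open Complex Finset


/-- For `V(x₁,x₂) = x₁^{2k} x₂^{2l}`, the `m`-th Fourier coefficient of `V^ave` with
respect to `(z₁,z₂) ↦ (e^{iθ}z₁, e^{-iθ}z₂)` vanishes unless `m = 4r` with
`|r| ≤ min(k,l)`, in which case it equals
`4^{-(k+l)} C(2k, k+r) C(2l, l-r) ρ₁^{2k} ρ₂^{2l} e^{2ir(θ₁-θ₂)}` for
`zⱼ = ρⱼ e^{iθⱼ}`; in particular `R_{4r} = B_r ⊗ B_r` on such monomials. -/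

theorem fourier_coefficients_of_monomial_average (k l : ℕ) (V : ℝ → ℝ → ℝ)
    (hV : ∀ x₁ x₂ : ℝ, V x₁ x₂ = x₁ ^ (2 * k) * x₂ ^ (2 * l)) :
    (∀ m : ℤ, (¬ ∃ r : ℤ, m = 4 * r ∧ |r| ≤ (min k l : ℤ)) →
      ∀ z₁ z₂ : ℂ, Rcoef m V z₁ z₂ = 0) ∧
    (∀ r : ℤ, |r| ≤ (min k l : ℤ) →
      ∀ (ρ₁ ρ₂ θ₁ θ₂ : ℝ), 0 ≤ ρ₁ → 0 ≤ ρ₂ →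
        Rcoef (4 * r) V ((ρ₁ : ℂ) * Complex.exp (Complex.I * θ₁))
            ((ρ₂ : ℂ) * Complex.exp (Complex.I * θ₂)) =
          (4 : ℂ) ^ (-(k : ℤ) - (l : ℤ)) *
            (Nat.choose (2 * k) ((k : ℤ) + r).toNat : ℂ) *
            (Nat.choose (2 * l) ((l : ℤ) - r).toNat : ℂ) *
            (ρ₁ : ℂ) ^ (2 * k) * (ρ₂ : ℂ) ^ (2 * l) *
            Complex.exp (2 * (r : ℂ) * ((θ₁ : ℂ) - (θ₂ : ℂ)) * Complex.I)) := by
  constructor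
  · intro m hm z₁ z₂
    rw [Rcoef_eq k l V hV]
    refine Finset.sum_eq_zero fun p hp => Finset.sum_eq_zero fun q hq => ?_
    rw [if_neg]
    rintro ⟨h1, h2⟩
    have hp' : p ≤ 2*k := by simpa using Nat.lt_succ_iff.mp (Finset.mem_range.mp hp)
    have hq' : q ≤ 2*l := by simpa using Nat.lt_succ_iff.mp (Finset.mem_range.mp hq)
    refine hm ⟨(p:ℤ) - k, by omega, ?_⟩
    rw [abs_le]
    push_cast
    omega
  · intro r hr ρ₁ ρ₂ θ₁ θ₂ hρ₁ hρ₂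
    have hr' : -(min (k:ℤ) (l:ℤ)) ≤ r ∧ r ≤ min (k:ℤ) (l:ℤ) := by
      rw [← abs_le]; push_cast at hr; exact hr
    set p₀ : ℕ := ((k:ℤ) + r).toNat with hp₀
    set q₀ : ℕ := ((l:ℤ) - r).toNat with hq₀
    have hp₀' : ((p₀:ℕ):ℤ) = (k:ℤ) + r := Int.toNat_of_nonneg (by omega)
    have hq₀' : ((q₀:ℕ):ℤ) = (l:ℤ) - r := Int.toNat_of_nonneg (by omega)
    have hp₀le : p₀ ≤ 2*k := by omega
    have hq₀le : q₀ ≤ 2*l := by omega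
    rw [Rcoef_eq k l V hV]
    have hcongr : ∀ p ∈ Finset.range (2*k+1), ∀ q ∈ Finset.range (2*l+1),
        (if (2*(p:ℤ) - 2*k) + (2*(q:ℤ) - 2*l) = 0 ∧ (2*(p:ℤ)-2*k) - (2*(q:ℤ)-2*l) = 4*r
          then Tterm k l ((ρ₁:ℂ) * Complex.exp (Complex.I * θ₁))
            ((ρ₂:ℂ) * Complex.exp (Complex.I * θ₂)) p q else 0)
        = (if p = p₀ then (if q = q₀ then Tterm k l ((ρ₁:ℂ) * Complex.exp (Complex.I * θ₁))
            ((ρ₂:ℂ) * Complex.exp (Complex.I * θ₂)) p q else 0) else 0) := by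
      intro p _ q _
      by_cases h : p = p₀ ∧ q = q₀
      · obtain ⟨h1, h2⟩ := h
        subst h1; subst h2
        rw [if_pos (by constructor <;> omega), if_pos rfl, if_pos rfl]
      · have : ¬((2*(p:ℤ) - 2*k) + (2*(q:ℤ) - 2*l) = 0 ∧
            (2*(p:ℤ)-2*k) - (2*(q:ℤ)-2*l) = 4*r) := by
          intro ⟨h1, h2⟩
          exact h ⟨by omega, by omega⟩
        rw [if_neg this]
        by_cases h1 : p = p₀
        · by_cases h2 : q = q₀
          · exact absurd ⟨h1, h2⟩ h
          · rw [if_pos h1, if_neg h2]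
        · rw [if_neg h1]
    calc (∑ p ∈ Finset.range (2*k+1), ∑ q ∈ Finset.range (2*l+1),
          if (2*(p:ℤ) - 2*k) + (2*(q:ℤ) - 2*l) = 0 ∧ (2*(p:ℤ)-2*k) - (2*(q:ℤ)-2*l) = 4*r
          then Tterm k l ((ρ₁:ℂ) * Complex.exp (Complex.I * θ₁))
            ((ρ₂:ℂ) * Complex.exp (Complex.I * θ₂)) p q else 0)
        = ∑ p ∈ Finset.range (2*k+1), ∑ q ∈ Finset.range (2*l+1),
            (if p = p₀ then (if q = q₀ then Tterm k l ((ρ₁:ℂ) * Complex.exp (Complex.I * θ₁))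
              ((ρ₂:ℂ) * Complex.exp (Complex.I * θ₂)) p q else 0) else 0) := by
          exact Finset.sum_congr rfl fun p hp => Finset.sum_congr rfl fun q hq =>
            hcongr p hp q hq
      _ = Tterm k l ((ρ₁:ℂ) * Complex.exp (Complex.I * θ₁))
            ((ρ₂:ℂ) * Complex.exp (Complex.I * θ₂)) p₀ q₀ := by
          rw [Finset.sum_eq_single p₀]
          · rw [Finset.sum_eq_single q₀]
            · rw [if_pos rfl, if_pos rfl]
            · intro q _ hq; rw [if_pos rfl, if_neg hq]
            · intro h; exact absurd (Finset.mem_range.mpr (by omega)) h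
          · intro p _ hp; exact Finset.sum_eq_zero fun q _ => by rw [if_neg hp]
          · intro h; exact absurd (Finset.mem_range.mpr (by omega)) h
      _ = (4 : ℂ) ^ (-(k : ℤ) - (l : ℤ)) *
            (Nat.choose (2 * k) ((k : ℤ) + r).toNat : ℂ) *
            (Nat.choose (2 * l) ((l : ℤ) - r).toNat : ℂ) *
            (ρ₁ : ℂ) ^ (2 * k) * (ρ₂ : ℂ) ^ (2 * l) *
            Complex.exp (2 * (r : ℂ) * ((θ₁ : ℂ) - (θ₂ : ℂ)) * Complex.I) := by
          have hu1 : (starRingEnd ℂ) ((ρ₁:ℂ) * Complex.exp (Complex.I * θ₁))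
              = (ρ₁:ℂ) * Complex.exp (-(Complex.I * θ₁)) := by
            rw [map_mul, Complex.conj_ofReal, conj_exp_I]
          have hu2 : (starRingEnd ℂ) ((ρ₂:ℂ) * Complex.exp (Complex.I * θ₂))
              = (ρ₂:ℂ) * Complex.exp (-(Complex.I * θ₂)) := by
            rw [map_mul, Complex.conj_ofReal, conj_exp_I]
          have key : ∀ (θ : ℝ) (a b : ℕ) (d : ℤ), (a:ℤ) - (b:ℤ) = d →
              Complex.exp (Complex.I * θ) ^ a * Complex.exp (-(Complex.I * θ)) ^ b
              = Complex.exp ((d:ℂ) * θ * Complex.I) := by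
            intro θ a b d hd
            rw [Complex.exp_neg, ← zpow_natCast (Complex.exp (Complex.I * (θ:ℂ))) a,
              ← zpow_natCast (Complex.exp (Complex.I * (θ:ℂ)))⁻¹ b, inv_zpow, ← zpow_neg,
              ← zpow_add₀ (Complex.exp_ne_zero _),
              show (a:ℤ) + -(b:ℤ) = d from by omega, zpow_exp_eq]
          have hz1 : ((ρ₁:ℂ) * Complex.exp (Complex.I * θ₁))^p₀ *
              ((ρ₁:ℂ) * Complex.exp (-(Complex.I * θ₁)))^(2*k - p₀)
              = (ρ₁:ℂ)^(2*k) * Complex.exp (((2*r:ℤ):ℂ) * θ₁ * Complex.I) := by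
            rw [mul_pow, mul_pow,
              show (ρ₁:ℂ)^p₀ * Complex.exp (Complex.I * (θ₁:ℂ))^p₀ *
                ((ρ₁:ℂ)^(2*k-p₀) * Complex.exp (-(Complex.I * (θ₁:ℂ)))^(2*k-p₀))
                = ((ρ₁:ℂ)^p₀ * (ρ₁:ℂ)^(2*k-p₀)) *
                  (Complex.exp (Complex.I * (θ₁:ℂ))^p₀ *
                    Complex.exp (-(Complex.I * (θ₁:ℂ)))^(2*k-p₀)) from by ring,
              ← pow_add, key θ₁ p₀ (2*k-p₀) (2*r) (by omega),
              show p₀ + (2*k-p₀) = 2*k from by omega]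
          have hz2 : ((ρ₂:ℂ) * Complex.exp (Complex.I * θ₂))^q₀ *
              ((ρ₂:ℂ) * Complex.exp (-(Complex.I * θ₂)))^(2*l - q₀)
              = (ρ₂:ℂ)^(2*l) * Complex.exp (((-(2*r):ℤ):ℂ) * θ₂ * Complex.I) := by
            rw [mul_pow, mul_pow,
              show (ρ₂:ℂ)^q₀ * Complex.exp (Complex.I * (θ₂:ℂ))^q₀ *
                ((ρ₂:ℂ)^(2*l-q₀) * Complex.exp (-(Complex.I * (θ₂:ℂ)))^(2*l-q₀))
                = ((ρ₂:ℂ)^q₀ * (ρ₂:ℂ)^(2*l-q₀)) *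
                  (Complex.exp (Complex.I * (θ₂:ℂ))^q₀ *
                    Complex.exp (-(Complex.I * (θ₂:ℂ)))^(2*l-q₀)) from by ring,
              ← pow_add, key θ₂ q₀ (2*l-q₀) (-(2*r)) (by omega),
              show q₀ + (2*l-q₀) = 2*l from by omega]
          have hexp : Complex.exp (((2*r:ℤ):ℂ) * θ₁ * Complex.I) *
              Complex.exp (((-(2*r):ℤ):ℂ) * θ₂ * Complex.I)
              = Complex.exp (2 * (r : ℂ) * ((θ₁ : ℂ) - (θ₂ : ℂ)) * Complex.I) := by
            rw [← Complex.exp_add]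
            congr 1
            push_cast
            ring
          have hcoef : (4 : ℂ) ^ (-(k : ℤ) - (l : ℤ)) = ((2:ℂ)^(2*k+2*l))⁻¹ := by
            rw [show -(k:ℤ) - (l:ℤ) = -((k+l : ℕ):ℤ) from by push_cast; ring,
              zpow_neg, zpow_natCast, show (4:ℂ) = 2^2 from by norm_num, ← pow_mul,
              show 2*(k+l) = 2*k+2*l from by ring]
          set C : ℂ := (Nat.choose (2*k) p₀ : ℂ) * (Nat.choose (2*l) q₀ : ℂ) / 2^(2*k+2*l)
            with hC
          calc Tterm k l ((ρ₁:ℂ) * Complex.exp (Complex.I * θ₁))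
                ((ρ₂:ℂ) * Complex.exp (Complex.I * θ₂)) p₀ q₀
              = C * (((ρ₁:ℂ) * Complex.exp (Complex.I * θ₁))^p₀ *
                  ((ρ₁:ℂ) * Complex.exp (-(Complex.I * θ₁)))^(2*k - p₀)) *
                (((ρ₂:ℂ) * Complex.exp (Complex.I * θ₂))^q₀ *
                  ((ρ₂:ℂ) * Complex.exp (-(Complex.I * θ₂)))^(2*l - q₀)) := by
                rw [Tterm, hu1, hu2]; ring
            _ = C * ((ρ₁:ℂ)^(2*k) * Complex.exp (((2*r:ℤ):ℂ) * θ₁ * Complex.I)) *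
                ((ρ₂:ℂ)^(2*l) * Complex.exp (((-(2*r):ℤ):ℂ) * θ₂ * Complex.I)) := by
                rw [hz1, hz2]
            _ = C * (ρ₁:ℂ)^(2*k) * (ρ₂:ℂ)^(2*l) *
                (Complex.exp (((2*r:ℤ):ℂ) * θ₁ * Complex.I) *
                  Complex.exp (((-(2*r):ℤ):ℂ) * θ₂ * Complex.I)) := by ring
            _ = C * (ρ₁:ℂ)^(2*k) * (ρ₂:ℂ)^(2*l) *
                Complex.exp (2 * (r : ℂ) * ((θ₁ : ℂ) - (θ₂ : ℂ)) * Complex.I) := by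
                rw [hexp]
            _ = (4 : ℂ) ^ (-(k : ℤ) - (l : ℤ)) *
                (Nat.choose (2 * k) ((k : ℤ) + r).toNat : ℂ) *
                (Nat.choose (2 * l) ((l : ℤ) - r).toNat : ℂ) *
                (ρ₁ : ℂ) ^ (2 * k) * (ρ₂ : ℂ) ^ (2 * l) *
                Complex.exp (2 * (r : ℂ) * ((θ₁ : ℂ) - (θ₂ : ℂ)) * Complex.I) := by
                rw [hcoef, hC]
                ring
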